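/- arXiv:1012.1938 — 5 statements merged into one kernel-verified Lean document; each statement's English description precedes it below -/
import Mathlib

section
/- For all positive rationals p/q, the inequality 2^{p/q}·(p/q − 2/3) + 2/3 > 0 holds. -/
/-!
Writing `2 ^ x * (x - 2/3) + 2/3 = 2 ^ x * (x - 2/3 + 2/3 * 2 ^ (-x))` and using the tangent-line
bound `2 ^ (-x) > 1 - x log 2`, the second factor exceeds `x * (1 - 2/3 * log 2)`, which is
positive because `log 2 < 1`.
-/

open Real

lemma Real.one_sub_log_mul_lt_rpow_neg {b x : ℝ} (hb : 0 < b) (hb₁ : b ≠ 1) (hx : x ≠ 0) :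
    1 - log b * x < b ^ (-x) := by
  rw [rpow_def_of_pos hb, mul_neg]
  exact one_sub_lt_exp_neg (mul_ne_zero (log_ne_zero_of_pos_of_ne_one hb hb₁) hx)

lemma Real.two_rpow_mul_sub_two_thirds_add_pos {x : ℝ} (hx : 0 < x) :
    0 < (2 : ℝ) ^ x * (x - 2/3) + 2/3 := by
  have two_ne_one : (2 : ℝ) ≠ 1 := by norm_num
  have hlog : log 2 < 1 := by linarith [log_lt_sub_one_of_pos two_pos two_ne_one]
  have htangent := one_sub_log_mul_lt_rpow_neg two_pos two_ne_one hx.ne'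
  have hinv : (2 : ℝ) ^ x * 2 ^ (-x) = 1 := by
    rw [rpow_neg zero_le_two, mul_inv_cancel₀ (rpow_pos_of_pos two_pos x).ne']
  calc 0 < (2 : ℝ) ^ x * (x - 2/3 + 2/3 * (1 - log 2 * x)) :=
        mul_pos (rpow_pos_of_pos two_pos x) (by nlinarith)
    _ < 2 ^ x * (x - 2/3 + 2/3 * 2 ^ (-x)) := by gcongr
    _ = 2 ^ x * (x - 2/3) + 2/3 := by linear_combination (2/3) * hinv

/-- For all positive rationals `p/q`, `2^(p/q) * (p/q - 2/3) + 2/3 > 0`. -/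
theorem stmt1 (p q : ℕ) (hp : 0 < p) (hq : 0 < q) :
    0 < (2:ℝ) ^ ((p:ℝ)/(q:ℝ)) * ((p:ℝ)/(q:ℝ) - 2/3) + 2/3 :=
  two_rpow_mul_sub_two_thirds_add_pos (by positivity)
end

section
/- Let G be a congestion game with variable demands and affine cost functions c_r(ℓ) = a_r·ℓ + b_r with a_r > 0, b_r ≥ 0. Then the function P(x,d) = Σ_{i∈N} [ U_i(d_i) − Σ_{r∈x_i} c_r(Σ_{j≤i: r∈x_j} d_j)·d_i ] is an exact potential: for any single player k deviating from (x_k,d_k) to (y_k,Δ_k) while others stay fixed, P(y,Δ) − P(x,d) = π_k(y,Δ) − π_k(x,d). -/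
/-!
On each resource `r` let `g_r i` be the demand player `i` puts on `r` (zero if `r ∉ x i`). The cost
part of `P` splits over resources as `∑ r, (a r * T g_r + b r * ∑ i, g_r i)`, where
`T g = ∑_{j ≤ i} g i * g j`. Although `T` is written with the player order, it is symmetric:
`2 T g = (∑ g)^2 + ∑ g^2`. Hence replacing `g k = u` by `v` changes `T g` by `v ℓ' - u ℓ`, where
`ℓ, ℓ'` are the loads on `r` before and after, and that is exactly the change of player `k`'s cost
on `r`.
-/

open Finset

namespace Stmt4

/-- Load `ℓ_r(x,d) = Σ_{j : r ∈ x_j} d_j`. -/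
noncomputable def load {n : ℕ} {R : Type*} [Fintype R] [DecidableEq R]
    (x : Fin n → Finset R) (d : Fin n → ℝ) (r : R) : ℝ :=
  ∑ j, if r ∈ x j then d j else 0

/-- Payoff `π_i(x,d) = U_i(d_i) - d_i Σ_{r ∈ x_i} (a_r ℓ_r(x,d) + b_r)` with affine costs. -/
noncomputable def payoff {n : ℕ} {R : Type*} [Fintype R] [DecidableEq R]
    (a b : R → ℝ) (U : Fin n → ℝ → ℝ) (x : Fin n → Finset R) (d : Fin n → ℝ)
    (i : Fin n) : ℝ :=
  U i (d i) - d i * ∑ r ∈ x i, (a r * load x d r + b r)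

/-- Rosenthal-type potential
`P(x,d) = Σ_i [U_i(d_i) - Σ_{r ∈ x_i} c_r(Σ_{j ≤ i, r ∈ x_j} d_j) · d_i]`. -/
noncomputable def pot {n : ℕ} {R : Type*} [Fintype R] [DecidableEq R]
    (a b : R → ℝ) (U : Fin n → ℝ → ℝ) (x : Fin n → Finset R) (d : Fin n → ℝ) : ℝ :=
  ∑ i, (U i (d i) -
    ∑ r ∈ x i, (a r * (∑ j, if j ≤ i ∧ r ∈ x j then d j else 0) + b r) * d i)

theorem sum_update_sub {ι M : Type*} [Fintype ι] [DecidableEq ι] [AddCommGroup M] (g : ι → M)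
    (k : ι) (v : M) : ∑ i, Function.update g k v i - ∑ i, g i = v - g k := by
  rw [sum_update_of_mem (mem_univ k), sum_eq_add_sum_sdiff_singleton_of_mem (mem_univ k) g]
  abel

section TriangleSum

variable {ι K : Type*} [Fintype ι] [LinearOrder ι]

def triangleSum [CommSemiring K] (f : ι → K) : K :=
  ∑ i, ∑ j, if j ≤ i then f i * f j else 0

theorem two_mul_triangleSum [CommSemiring K] (f : ι → K) :
    2 * triangleSum f = (∑ i, f i) ^ 2 + ∑ i, f i ^ 2 := by
  have hswap : triangleSum f = ∑ i, ∑ j, if i ≤ j then f i * f j else 0 := by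
    rw [triangleSum, sum_comm]
    exact sum_congr rfl fun i _ => sum_congr rfl fun j _ => by rw [mul_comm]
  have hpair : ∀ i j : ι, ((if j ≤ i then f i * f j else 0) + if i ≤ j then f i * f j else 0)
      = f i * f j + if i = j then f i * f j else 0 := by
    intro i j
    rcases lt_trichotomy i j with h | rfl | h
    · rw [if_neg h.not_ge, if_pos h.le, if_neg h.ne, zero_add, add_zero]
    · simp only [le_refl, if_true]
    · rw [if_pos h.le, if_neg h.not_ge, if_neg h.ne']
  calc 2 * triangleSum f = triangleSum f + triangleSum f := two_mul _
    _ = ∑ i, ∑ j, (f i * f j + if i = j then f i * f j else 0) := by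
      nth_rewrite 2 [hswap]
      simp_rw [triangleSum, ← sum_add_distrib, hpair]
    _ = _ := by simp only [sum_add_distrib, sum_ite_eq, mem_univ, if_true, sq, sum_mul_sum]

theorem triangleSum_update [Field K] [NeZero (2 : K)] [DecidableEq ι] (f : ι → K) (k : ι) (v : K) :
    triangleSum (Function.update f k v) - triangleSum f
      = v * ∑ i, Function.update f k v i - f k * ∑ i, f i := by
  apply mul_left_cancel₀ (two_ne_zero (α := K))
  have hsq : ∀ i, Function.update f k v i ^ 2 = Function.update (f · ^ 2) k (v ^ 2) i :=
    Function.apply_update (fun _ t => t ^ 2) f k v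
  simp_rw [mul_sub, two_mul_triangleSum, hsq, sum_update_of_mem (mem_univ k)]
  rw [sum_eq_add_sum_sdiff_singleton_of_mem (mem_univ k) (f · ^ 2),
    sum_eq_add_sum_sdiff_singleton_of_mem (mem_univ k) f]
  ring

theorem affine_triangleSum_update [Field K] [NeZero (2 : K)] [DecidableEq ι] (a b : K)
    (g : ι → K) (k : ι) (v : K) :
    (a * triangleSum (Function.update g k v) + b * ∑ i, Function.update g k v i)
        - (a * triangleSum g + b * ∑ i, g i)
      = v * (a * ∑ i, Function.update g k v i + b) - g k * (a * ∑ i, g i + b) := by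
  linear_combination a * triangleSum_update g k v + b * sum_update_sub g k v

end TriangleSum

section Game

variable {n : ℕ} {R : Type*} [DecidableEq R]

def resourceDemand (x : Fin n → Finset R) (d : Fin n → ℝ) (r : R) (i : Fin n) : ℝ :=
  if r ∈ x i then d i else 0

theorem load_eq_sum_resourceDemand [Fintype R] (x : Fin n → Finset R) (d : Fin n → ℝ) (r : R) :
    load x d r = ∑ i, resourceDemand x d r i :=
  rfl

theorem resourceDemand_update (x : Fin n → Finset R) (d : Fin n → ℝ) (k : Fin n) (y : Finset R)
    (Δ : ℝ) (r : R) :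
    resourceDemand (Function.update x k y) (Function.update d k Δ) r
      = Function.update (resourceDemand x d r) k (if r ∈ y then Δ else 0) := by
  funext i
  rcases eq_or_ne i k with rfl | hik
  · simp [resourceDemand]
  · simp [resourceDemand, hik]

theorem mul_sum_mem_eq_sum_resourceDemand_mul [Fintype R] (x : Fin n → Finset R)
    (d : Fin n → ℝ) (i : Fin n) (c : R → ℝ) :
    d i * ∑ r ∈ x i, c r = ∑ r, resourceDemand x d r i * c r := by
  rw [mul_sum, ← sum_subset (subset_univ (x i))]
  · exact sum_congr rfl fun r hr => by rw [resourceDemand, if_pos hr]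
  · intro r _ hr
    rw [resourceDemand, if_neg hr, zero_mul]

theorem pot_eq_sum_resources [Fintype R] (a b : R → ℝ) (U : Fin n → ℝ → ℝ) (x : Fin n → Finset R)
    (d : Fin n → ℝ) :
    pot a b U x d = ∑ i, U i (d i)
      - ∑ r, (a r * triangleSum (resourceDemand x d r) + b r * ∑ i, resourceDemand x d r i) := by
  have hprefix : ∀ i r, r ∈ x i → (∑ j, if j ≤ i ∧ r ∈ x j then d j else 0) * d i
      = ∑ j, if j ≤ i then resourceDemand x d r i * resourceDemand x d r j else 0 := by
    intro i r hr
    rw [sum_mul]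
    refine sum_congr rfl fun j _ => ?_
    by_cases hj : j ≤ i <;> by_cases hrj : r ∈ x j <;> simp [resourceDemand, hr, hj, hrj, mul_comm]
  have hplayer : ∀ i, ∑ r ∈ x i, (a r * (∑ j, if j ≤ i ∧ r ∈ x j then d j else 0) + b r) * d i
      = ∑ r, (a r * (∑ j, if j ≤ i then resourceDemand x d r i * resourceDemand x d r j else 0)
          + b r * resourceDemand x d r i) := by
    intro i
    rw [← sum_subset (subset_univ (x i))]
    · refine sum_congr rfl fun r hr => ?_
      rw [add_mul, mul_assoc, hprefix i r hr, resourceDemand, if_pos hr]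
    · intro r _ hr
      simp [resourceDemand, hr]
  rw [pot, sum_sub_distrib]
  simp_rw [hplayer]
  rw [sum_comm]
  refine congrArg _ (sum_congr rfl fun r _ => ?_)
  rw [sum_add_distrib, ← mul_sum, ← mul_sum]
  rfl

end Game

theorem stmt4_general {n : ℕ} {R : Type*} [Fintype R] [DecidableEq R]
    (a b : R → ℝ)
    (U : Fin n → ℝ → ℝ) (x : Fin n → Finset R) (d : Fin n → ℝ)
    (k : Fin n) (y : Finset R) (Δ : ℝ) :
    pot a b U (Function.update x k y) (Function.update d k Δ) - pot a b U x d =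
      payoff a b U (Function.update x k y) (Function.update d k Δ) k -
        payoff a b U x d k := by
  have hutility : ∑ i, U i (Function.update d k Δ i) - ∑ i, U i (d i) = U k Δ - U k (d k) := by
    simp_rw [Function.apply_update (fun i t => U i t) d k Δ]
    exact sum_update_sub (fun i => U i (d i)) k (U k Δ)
  rw [pot_eq_sum_resources, pot_eq_sum_resources, payoff, payoff,
    mul_sum_mem_eq_sum_resourceDemand_mul, mul_sum_mem_eq_sum_resourceDemand_mul]
  simp_rw [load_eq_sum_resourceDemand, resourceDemand_update, Function.update_self]
  have hresources := sum_congr (s₁ := univ) rfl fun r _ =>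
    affine_triangleSum_update (a r) (b r) (resourceDemand x d r) k (if r ∈ y then Δ else 0)
  rw [sum_sub_distrib, sum_sub_distrib] at hresources
  linear_combination hutility - hresources

/-- In a congestion game with variable demands and affine costs `c_r(ℓ) = a_r ℓ + b_r`
(`a_r > 0`, `b_r ≥ 0`), `P` is an exact potential: for any unilateral deviation of
player `k` from `(x_k, d_k)` to `(y_k, Δ_k)`,
`P(y,Δ) - P(x,d) = π_k(y,Δ) - π_k(x,d)`. -/
theorem stmt4 {n : ℕ} {R : Type*} [Fintype R] [DecidableEq R]
    (a b : R → ℝ) (ha : ∀ r, 0 < a r) (hb : ∀ r, 0 ≤ b r)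
    (U : Fin n → ℝ → ℝ) (x : Fin n → Finset R) (d : Fin n → ℝ)
    (k : Fin n) (y : Finset R) (Δ : ℝ) :
    pot a b U (Function.update x k y) (Function.update d k Δ) - pot a b U x d =
      payoff a b U (Function.update x k y) (Function.update d k Δ) k -
        payoff a b U x d k :=
  stmt4_general a b U x d k y Δ

end Stmt4
end

section
/- Let G be a congestion game with variable demands and homogeneously exponential costs c_r(ℓ) = a_r·e^{φℓ}, a_r > 0, φ > 0. Define Φ(x,d) = Σ_{i∈N} ∫₀^{d_i} U_i'(s)/(φs+1) ds − Σ_{r∈R} c_r(ℓ_r(x,d)). If player k strictly improves her payoff by changing only her configuration from x_k to y_k (keeping d_k fixed and d_k > 0), then Φ((y_k,d_k), x̄_{−k}) > Φ((x_k,d_k), x̄_{−k}); specifically Φ((y_k,d_k),x̄_{−k}) − Φ((x_k,d_k),x̄_{−k}) = (1/d_k − 1/(d_k·e^{φd_k}))·(π_k((y_k,d_k),x̄_{−k}) − π_k((x_k,d_k),x̄_{−k})). -/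
/-!
Write the load on `r` as the load `L_r` of the other players plus `d_k` if `k` uses `r`. Then
`a_r e^{φ ℓ_r} = F_r · e^{φ d_k}` or `F_r` according as `k` uses `r` or not, where
`F_r = a_r e^{φ L_r}` does not depend on `k`'s choice. So a switch of `k` from `z` to `y` changes
`Φ` by `(e^{φ d_k} - 1)(Σ_z F - Σ_y F)` and `π_k` by `d_k e^{φ d_k}(Σ_z F - Σ_y F)`; the ratio is
`1/d_k - 1/(d_k e^{φ d_k})`, which is positive because `φ d_k > 0`.
-/

open Finset

namespace Stmt7

/-- Load `ℓ_r(x,d) = Σ_{j : r ∈ x_j} d_j`. -/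
noncomputable def load {ι R : Type*} [Fintype ι] [DecidableEq R]
    (x : ι → Finset R) (d : ι → ℝ) (r : R) : ℝ :=
  ∑ j, if r ∈ x j then d j else 0

/-- Payoff with homogeneously exponential costs:
`π_i(x,d) = U_i(d_i) - d_i Σ_{r ∈ x_i} a_r e^(φ ℓ_r(x,d))`. -/
noncomputable def payoff {ι R : Type*} [Fintype ι] [DecidableEq R]
    (a : R → ℝ) (φ : ℝ) (U : ι → ℝ → ℝ) (x : ι → Finset R) (d : ι → ℝ) (i : ι) : ℝ :=
  U i (d i) - d i * ∑ r ∈ x i, a r * Real.exp (φ * load x d r)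

/-- The local essential potential
`Φ(x,d) = Σ_i ∫₀^{d_i} U_i'(s)/(φ s + 1) ds - Σ_{r ∈ R} a_r e^(φ ℓ_r(x,d))`. -/
noncomputable def Phi {ι R : Type*} [Fintype ι] [Fintype R] [DecidableEq R]
    (a : R → ℝ) (φ : ℝ) (U' : ι → ℝ → ℝ) (x : ι → Finset R) (d : ι → ℝ) : ℝ :=
  (∑ i, ∫ s in (0:ℝ)..(d i), U' i s / (φ * s + 1)) -
    ∑ r, a r * Real.exp (φ * load x d r)

noncomputable def othersLoad {ι R : Type*} [Fintype ι] [DecidableEq ι] [DecidableEq R]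
    (x : ι → Finset R) (d : ι → ℝ) (k : ι) (r : R) : ℝ :=
  ∑ j ∈ univ.erase k, if r ∈ x j then d j else 0

section Deviation

variable {ι R : Type*} [Fintype ι] [DecidableEq ι] [DecidableEq R]
  (a : R → ℝ) (φ : ℝ) (x : ι → Finset R) (d : ι → ℝ) (k : ι)

theorem load_update (s : Finset R) (r : R) :
    load (Function.update x k s) d r = othersLoad x d k r + if r ∈ s then d k else 0 := by
  rw [load, ← add_sum_erase _ _ (mem_univ k), add_comm, Function.update_self, othersLoad]
  congr 1
  refine sum_congr rfl fun j hj => ?_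
  rw [Function.update_of_ne (ne_of_mem_erase hj)]

theorem sum_cost_update [Fintype R] (s : Finset R) :
    ∑ r, a r * Real.exp (φ * load (Function.update x k s) d r) =
      ∑ r, a r * Real.exp (φ * othersLoad x d k r) +
        (Real.exp (φ * d k) - 1) * ∑ r ∈ s, a r * Real.exp (φ * othersLoad x d k r) := by
  rw [← Fintype.sum_ite_mem s, mul_sum, ← sum_add_distrib]
  refine sum_congr rfl fun r _ => ?_
  rw [load_update]
  split_ifs <;> simp only [mul_add, Real.exp_add, add_zero, mul_zero]; ring

theorem sum_mem_cost_update (s : Finset R) :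
    ∑ r ∈ s, a r * Real.exp (φ * load (Function.update x k s) d r) =
      Real.exp (φ * d k) * ∑ r ∈ s, a r * Real.exp (φ * othersLoad x d k r) := by
  rw [mul_sum]
  refine sum_congr rfl fun r hr => ?_
  rw [load_update, if_pos hr, mul_add, Real.exp_add]
  ring

theorem Phi_update_sub_Phi_update [Fintype R] (U' : ι → ℝ → ℝ) (y z : Finset R) :
    Phi a φ U' (Function.update x k y) d - Phi a φ U' (Function.update x k z) d =
      (Real.exp (φ * d k) - 1) *
        (∑ r ∈ z, a r * Real.exp (φ * othersLoad x d k r) -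
          ∑ r ∈ y, a r * Real.exp (φ * othersLoad x d k r)) := by
  simp only [Phi, sum_cost_update]
  ring

theorem payoff_update_sub_payoff_update (U : ι → ℝ → ℝ) (y z : Finset R) :
    payoff a φ U (Function.update x k y) d k - payoff a φ U (Function.update x k z) d k =
      d k * Real.exp (φ * d k) *
        (∑ r ∈ z, a r * Real.exp (φ * othersLoad x d k r) -
          ∑ r ∈ y, a r * Real.exp (φ * othersLoad x d k r)) := by
  simp only [payoff, Function.update_self, sum_mem_cost_update]
  ring

end Deviation

theorem stmt7_general {ι R : Type*} [Fintype ι] [Fintype R] [DecidableEq ι] [DecidableEq R]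
    (a : R → ℝ) (φ : ℝ) (hφ : 0 < φ)
    (U U' : ι → ℝ → ℝ)
    (x : ι → Finset R) (d : ι → ℝ)
    (k : ι) (y : Finset R) (hdk : 0 < d k)
    (himp : payoff a φ U x d k < payoff a φ U (Function.update x k y) d k) :
    Phi a φ U' (Function.update x k y) d - Phi a φ U' x d =
      (1 / d k - 1 / (d k * Real.exp (φ * d k))) *
        (payoff a φ U (Function.update x k y) d k - payoff a φ U x d k) ∧
    Phi a φ U' x d < Phi a φ U' (Function.update x k y) d := by
  have hΔ : Phi a φ U' (Function.update x k y) d - Phi a φ U' x d =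
      (1 / d k - 1 / (d k * Real.exp (φ * d k))) *
        (payoff a φ U (Function.update x k y) d k - payoff a φ U x d k) := by
    have hPhi := Phi_update_sub_Phi_update a φ x d k U' y (x k)
    have hpay := payoff_update_sub_payoff_update a φ x d k U y (x k)
    rw [Function.update_eq_self] at hPhi hpay
    rw [hPhi, hpay]
    field_simp
  have hcoef : 0 < 1 / d k - 1 / (d k * Real.exp (φ * d k)) := by
    have he : 1 < Real.exp (φ * d k) := Real.one_lt_exp_iff.mpr (mul_pos hφ hdk)
    rw [sub_pos]
    exact one_div_lt_one_div_of_lt hdk (lt_mul_of_one_lt_right hdk he)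
  exact ⟨hΔ, sub_pos.mp (hΔ ▸ mul_pos hcoef (sub_pos.mpr himp))⟩

/-- With homogeneously exponential costs, if player `k` strictly improves her payoff by
changing only her configuration from `x_k` to `y_k` (with fixed demand `d_k > 0`), then
`Φ` strictly increases; specifically the change in `Φ` equals
`(1/d_k - 1/(d_k e^(φ d_k)))` times the change in her payoff. -/
theorem stmt7 {ι R : Type*} [Fintype ι] [Fintype R] [DecidableEq ι] [DecidableEq R]
    (a : R → ℝ) (ha : ∀ r, 0 < a r) (φ : ℝ) (hφ : 0 < φ)
    (U U' : ι → ℝ → ℝ) (hU' : ∀ i t, HasDerivAt (U i) (U' i t) t)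
    (x : ι → Finset R) (d : ι → ℝ) (hd : ∀ j, 0 ≤ d j)
    (k : ι) (y : Finset R) (hdk : 0 < d k)
    (himp : payoff a φ U x d k < payoff a φ U (Function.update x k y) d k) :
    Phi a φ U' (Function.update x k y) d - Phi a φ U' x d =
      (1 / d k - 1 / (d k * Real.exp (φ * d k))) *
        (payoff a φ U (Function.update x k y) d k - payoff a φ U x d k) ∧
    Phi a φ U' x d < Phi a φ U' (Function.update x k y) d :=
  stmt7_general a φ hφ U U' x d k y hdk himp

end Stmt7
end

section
/- If C is a set of cost functions consistent with congestion games with variable demands (every such game with costs in C and concave non-decreasing differentiable utilities has a PNE), then every c ∈ C has unbounded marginal total cost: c(x) + x·c'(x) → ∞ as x → ∞. Equivalently, if c(x) + x·c'(x) < M for all x, then the one-player game with a single resource, cost c, and utility U(x) = (M+1)x has no pure Nash equilibrium. -/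
/-! With a linear utility of slope `a`, the payoff `π(x) = a x - x c(x)` has derivative
`a - (c(x) + x c'(x))`, the slope minus the marginal total cost. If the marginal total cost
stays below `a`, the payoff is strictly increasing on `[0, ∞)`, so no demand maximizes it. -/

open Set

theorem StrictMonoOn.not_isMaxOn_Ici {α β : Type*} [Preorder α] [NoMaxOrder α] [Preorder β]
    {f : α → β} {a d : α} (hf : StrictMonoOn f (Ici a)) (hd : a ≤ d) :
    ¬ IsMaxOn f (Ici a) d := fun hmax => by
  obtain ⟨e, hde⟩ := exists_gt d
  have he : a ≤ e := hd.trans hde.le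
  exact (hf hd he hde).not_ge (isMaxOn_iff.mp hmax e he)

theorem hasDerivAt_linear_sub_mul_self {c c' : ℝ → ℝ} (a x : ℝ) (hc : HasDerivAt c (c' x) x) :
    HasDerivAt (fun y => a * y - y * c y) (a - (c x + x * c' x)) x := by
  have h := ((hasDerivAt_id' x).const_mul a).fun_sub ((hasDerivAt_id' x).fun_mul hc)
  rwa [mul_one, one_mul] at h

theorem strictMonoOn_linear_sub_mul_self {c c' : ℝ → ℝ} {a : ℝ}
    (hderiv : ∀ x, HasDerivAt c (c' x) x) (hmarginal : ∀ x, 0 < x → c x + x * c' x < a) :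
    StrictMonoOn (fun y => a * y - y * c y) (Ici 0) := by
  refine strictMonoOn_of_deriv_pos (convex_Ici 0) (fun x _ => ?_) (fun x hx => ?_)
  · exact (hasDerivAt_linear_sub_mul_self a x (hderiv x)).continuousAt.continuousWithinAt
  · rw [interior_Ici] at hx
    rw [(hasDerivAt_linear_sub_mul_self a x (hderiv x)).deriv, sub_pos]
    exact hmarginal x hx

theorem stmt11_general (c c' : ℝ → ℝ) (M : ℝ)
    (hderiv : ∀ t : ℝ, HasDerivAt c (c' t) t)
    (hM : ∀ x : ℝ, 0 ≤ x → c x + x * c' x < M) :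
    ¬ ∃ d : ℝ, 0 ≤ d ∧ ∀ e : ℝ, 0 ≤ e →
      (M + 1) * e - e * c e ≤ (M + 1) * d - d * c d := by
  rintro ⟨d, hd, hmax⟩
  have hmono : StrictMonoOn (fun y => (M + 1) * y - y * c y) (Ici 0) :=
    strictMonoOn_linear_sub_mul_self hderiv fun x hx => (hM x hx.le).trans (lt_add_one M)
  exact hmono.not_isMaxOn_Ici hd (isMaxOn_iff.mpr hmax)

/-- If `c` is a non-negative, strictly increasing, differentiable cost function with
bounded marginal total cost `c(x) + x c'(x) < M`, then the one-player congestion game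
with variable demand, a single resource with cost `c`, and utility `U(x) = (M+1) x`
has no pure Nash equilibrium (i.e. the payoff `(M+1) d - d c(d)` has no maximizer on `ℝ≥0`). -/
theorem stmt11 (c c' : ℝ → ℝ) (M : ℝ)
    (hderiv : ∀ t : ℝ, HasDerivAt c (c' t) t)
    (hnn : ∀ x : ℝ, 0 ≤ x → 0 ≤ c x)
    (hmono : StrictMonoOn c (Set.Ici 0))
    (hM : ∀ x : ℝ, 0 ≤ x → c x + x * c' x < M) :
    ¬ ∃ d : ℝ, 0 ≤ d ∧ ∀ e : ℝ, 0 ≤ e →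
      (M + 1) * e - e * c e ≤ (M + 1) * d - d * c d :=
  stmt11_general c c' M hderiv hM
end

section
/- In the two-player uniform congestion game with variable demands of Example 4 (46 resources, identity cost c(ℓ)=ℓ, strategy sets and utility values U₁(0)=0, U₁(1)=32, U₁(2)=53, U₂(0)=0, U₂(1)=32, U₂(2)=46 as specified), the four payoff differences along the cycle each equal 1: π₁((R₂₁∪R₂₂,2),(R₂₁∪R₀₁,1)) − π₁((R₁₂∪R₁₀,1),(R₂₁∪R₀₁,1)) = 1, and similarly for the other three deviations, so none of the four profiles with positive demands is a pure Nash equilibrium. -/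
open Finset

namespace Stmt17

/-- Resource block `R₁₂` (4 resources). -/
def R12 : Finset (Fin 46) := filter (fun r => r.val < 4) univ
/-- Resource block `R₁₀` (18 resources). -/
def R10 : Finset (Fin 46) := filter (fun r => 4 ≤ r.val ∧ r.val < 22) univ
/-- Resource block `R₂₁` (8 resources). -/
def R21 : Finset (Fin 46) := filter (fun r => 22 ≤ r.val ∧ r.val < 30) univ
/-- Resource block `R₂₂` (9 resources). -/
def R22 : Finset (Fin 46) := filter (fun r => 30 ≤ r.val ∧ r.val < 39) univ
/-- Resource block `R₀₁` (7 resources). -/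
def R01 : Finset (Fin 46) := filter (fun r => 39 ≤ r.val ∧ r.val < 46) univ

/-- Load on resource `r` with identity costs. -/
def loadR (s1 : Finset (Fin 46)) (d1 : ℝ) (s2 : Finset (Fin 46)) (d2 : ℝ)
    (r : Fin 46) : ℝ :=
  (if r ∈ s1 then d1 else 0) + (if r ∈ s2 then d2 else 0)

/-- Uniform-cost payoff of player 1: `U₁(d₁) - Σ_{r ∈ s1} ℓ_r`. -/
noncomputable def pay1 (U1 : ℝ → ℝ) (s1 : Finset (Fin 46)) (d1 : ℝ)
    (s2 : Finset (Fin 46)) (d2 : ℝ) : ℝ :=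
  U1 d1 - ∑ r ∈ s1, loadR s1 d1 s2 d2 r

/-- Uniform-cost payoff of player 2: `U₂(d₂) - Σ_{r ∈ s2} ℓ_r`. -/
noncomputable def pay2 (U2 : ℝ → ℝ) (s1 : Finset (Fin 46)) (d1 : ℝ)
    (s2 : Finset (Fin 46)) (d2 : ℝ) : ℝ :=
  U2 d2 - ∑ r ∈ s2, loadR s1 d1 s2 d2 r

/-- The profile `(s1,d1,s2,d2)` admits a profitable unilateral deviation
(player 1's configurations are `R₁₂∪R₁₀` and `R₂₁∪R₂₂`, player 2's are
`R₂₁∪R₀₁` and `R₁₂∪R₂₂`; demands range over `ℝ≥0`). -/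
def notPNE (U1 U2 : ℝ → ℝ) (s1 : Finset (Fin 46)) (d1 : ℝ)
    (s2 : Finset (Fin 46)) (d2 : ℝ) : Prop :=
  (∃ t1 ∈ ({R12 ∪ R10, R21 ∪ R22} : Set (Finset (Fin 46))), ∃ e1 : ℝ, 0 ≤ e1 ∧
    pay1 U1 s1 d1 s2 d2 < pay1 U1 t1 e1 s2 d2) ∨
  (∃ t2 ∈ ({R21 ∪ R01, R12 ∪ R22} : Set (Finset (Fin 46))), ∃ e2 : ℝ, 0 ≤ e2 ∧
    pay2 U2 s1 d1 s2 d2 < pay2 U2 s1 d1 t2 e2)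

/-! With identity costs the load on a resource is the total demand of the players using it, so
player `i` pays `dᵢ·|xᵢ| + dⱼ·|xᵢ ∩ xⱼ|`. Every payoff is therefore `Uᵢ(dᵢ)` minus a combination of
the block sizes, and along the cycle each deviation gains exactly `1`. -/

lemma sum_loadR (s s1 s2 : Finset (Fin 46)) (d1 d2 : ℝ) :
    ∑ r ∈ s, loadR s1 d1 s2 d2 r = #(s ∩ s1) * d1 + #(s ∩ s2) * d2 := by
  simp [loadR, sum_add_distrib, mul_comm]

lemma pay1_eq (U1 : ℝ → ℝ) (s1 s2 : Finset (Fin 46)) (d1 d2 : ℝ) :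
    pay1 U1 s1 d1 s2 d2 = U1 d1 - (#s1 * d1 + #(s1 ∩ s2) * d2) := by
  rw [pay1, sum_loadR, inter_self]

lemma pay2_eq (U2 : ℝ → ℝ) (s1 s2 : Finset (Fin 46)) (d1 d2 : ℝ) :
    pay2 U2 s1 d1 s2 d2 = U2 d2 - (#(s1 ∩ s2) * d1 + #s2 * d2) := by
  rw [pay2, sum_loadR, inter_self, inter_comm]

lemma card_R12_union_R10 : #(R12 ∪ R10) = 22 := by decide
lemma card_R21_union_R22 : #(R21 ∪ R22) = 17 := by decide
lemma card_R21_union_R01 : #(R21 ∪ R01) = 15 := by decide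
lemma card_R12_union_R22 : #(R12 ∪ R22) = 13 := by decide
lemma card_R12_union_R10_inter_R21_union_R01 : #((R12 ∪ R10) ∩ (R21 ∪ R01)) = 0 := by decide
lemma card_R12_union_R10_inter_R12_union_R22 : #((R12 ∪ R10) ∩ (R12 ∪ R22)) = 4 := by decide
lemma card_R21_union_R22_inter_R21_union_R01 : #((R21 ∪ R22) ∩ (R21 ∪ R01)) = 8 := by decide
lemma card_R21_union_R22_inter_R12_union_R22 : #((R21 ∪ R22) ∩ (R12 ∪ R22)) = 9 := by decide

theorem stmt17_general (U1 U2 : ℝ → ℝ)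
    (h11 : U1 1 = 32) (h12 : U1 2 = 53)
    (h21 : U2 1 = 32) (h22 : U2 2 = 46) :
    pay1 U1 (R21 ∪ R22) 2 (R21 ∪ R01) 1 - pay1 U1 (R12 ∪ R10) 1 (R21 ∪ R01) 1 = 1 ∧
    pay2 U2 (R21 ∪ R22) 2 (R12 ∪ R22) 2 - pay2 U2 (R21 ∪ R22) 2 (R21 ∪ R01) 1 = 1 ∧
    pay1 U1 (R12 ∪ R10) 1 (R12 ∪ R22) 2 - pay1 U1 (R21 ∪ R22) 2 (R12 ∪ R22) 2 = 1 ∧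
    pay2 U2 (R12 ∪ R10) 1 (R21 ∪ R01) 1 - pay2 U2 (R12 ∪ R10) 1 (R12 ∪ R22) 2 = 1 ∧
    notPNE U1 U2 (R12 ∪ R10) 1 (R21 ∪ R01) 1 ∧
    notPNE U1 U2 (R21 ∪ R22) 2 (R21 ∪ R01) 1 ∧
    notPNE U1 U2 (R21 ∪ R22) 2 (R12 ∪ R22) 2 ∧
    notPNE U1 U2 (R12 ∪ R10) 1 (R12 ∪ R22) 2 := by
  refine ⟨?_, ?_, ?_, ?_,
    .inl ⟨R21 ∪ R22, .inr rfl, 2, zero_le_two, ?_⟩, .inr ⟨R12 ∪ R22, .inr rfl, 2, zero_le_two, ?_⟩,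
    .inl ⟨R12 ∪ R10, .inl rfl, 1, zero_le_one, ?_⟩, .inr ⟨R21 ∪ R01, .inl rfl, 1, zero_le_one, ?_⟩⟩
  all_goals
    simp only [pay1_eq, pay2_eq, card_R12_union_R10, card_R21_union_R22, card_R21_union_R01,
      card_R12_union_R22, card_R12_union_R10_inter_R21_union_R01,
      card_R12_union_R10_inter_R12_union_R22, card_R21_union_R22_inter_R21_union_R01,
      card_R21_union_R22_inter_R12_union_R22, h11, h12, h21, h22]
    norm_num

/-- In the two-player uniform congestion game with variable demands on 46 resources
with identity costs and the specified utility values, the four payoff differences along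
the improvement cycle each equal 1, so none of the four profiles with positive demands
is a pure Nash equilibrium. -/
theorem stmt17 (U1 U2 : ℝ → ℝ)
    (h10 : U1 0 = 0) (h11 : U1 1 = 32) (h12 : U1 2 = 53)
    (h20 : U2 0 = 0) (h21 : U2 1 = 32) (h22 : U2 2 = 46) :
    pay1 U1 (R21 ∪ R22) 2 (R21 ∪ R01) 1 - pay1 U1 (R12 ∪ R10) 1 (R21 ∪ R01) 1 = 1 ∧
    pay2 U2 (R21 ∪ R22) 2 (R12 ∪ R22) 2 - pay2 U2 (R21 ∪ R22) 2 (R21 ∪ R01) 1 = 1 ∧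
    pay1 U1 (R12 ∪ R10) 1 (R12 ∪ R22) 2 - pay1 U1 (R21 ∪ R22) 2 (R12 ∪ R22) 2 = 1 ∧
    pay2 U2 (R12 ∪ R10) 1 (R21 ∪ R01) 1 - pay2 U2 (R12 ∪ R10) 1 (R12 ∪ R22) 2 = 1 ∧
    notPNE U1 U2 (R12 ∪ R10) 1 (R21 ∪ R01) 1 ∧
    notPNE U1 U2 (R21 ∪ R22) 2 (R21 ∪ R01) 1 ∧
    notPNE U1 U2 (R21 ∪ R22) 2 (R12 ∪ R22) 2 ∧
    notPNE U1 U2 (R12 ∪ R10) 1 (R12 ∪ R22) 2 :=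
  stmt17_general U1 U2 h11 h12 h21 h22

end Stmt17
end
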